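/- Let D ≥ 0, let φ : [D, ∞) → ℝ be continuous and strictly positive, H(x) = ∫_D^x dr/φ(r), I = ∫_D^∞ dr/φ(r), and let H⁻¹ : [0, I) → [D, ∞) be the inverse of H. Fix T > 0, let η : [0, T] → ℝ be continuous and nondecreasing with η(0) = 0, and let a ≥ 0 satisfy η(T) ≤ a < I. Define x_t = H⁻¹(a − η(t)) for t ∈ [0, T]. Then x is continuous with values in [D, ∞), and for every t ∈ [0, T], x_t = H⁻¹(a − η(T)) + ∫_{(t, T]} φ(x_s) dη(s), where the integral is the Lebesgue–Stieltjes integral with respect to the measure induced by η on [0, T]. -/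

import Mathlib

/-!
`H` is continuous and strictly increasing on `[D, ∞)` with `H' = 1/φ`, and `a < I` places `[0, a]`
inside its range, so `H⁻¹` is continuous on `[0, a]` with `(H⁻¹)' = φ ∘ H⁻¹`. Since `η` is
continuous, it pushes `dη` on `(t, T]` forward to Lebesgue measure on `(η t, η T]`; the integral
becomes `∫_{a - η T}^{a - η t} φ(H⁻¹ v) dv`, which equals `x_t - x_T` by the fundamental theorem
of calculus.
-/

open MeasureTheory Set Filter Function Topology

/-- `H(x) = ∫_D^x dr / φ(r)`. -/
noncomputable def Hfun (D : ℝ) (φ : ℝ → ℝ) (x : ℝ) : ℝ := ∫ r in D..x, 1 / φ r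

/-- `H⁻¹ : [0, I) → [D, ∞)`, the inverse of `H` on `[D, ∞)`. -/
noncomputable def Hinv (D : ℝ) (φ : ℝ → ℝ) (y : ℝ) : ℝ :=
  Function.invFunOn (Hfun D φ) (Set.Ici D) y

theorem StrictMonoOn.continuousOn_invFunOn {f : ℝ → ℝ} {s : Set ℝ} [hs : s.OrdConnected]
    (hf : ContinuousOn f s) (hmono : StrictMonoOn f s) :
    ContinuousOn (invFunOn f s) (f '' s) := by
  have : (f '' s).OrdConnected :=
    isPreconnected_iff_ordConnected.1 (hs.isPreconnected.image f hf)
  let e := hmono.orderIso f s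
  rw [continuousOn_iff_continuous_domRestrict]
  convert continuous_subtype_val.comp e.symm.continuous
  ext ⟨_, x, hx, rfl⟩
  have : e.symm ⟨f x, x, hx, rfl⟩ = ⟨x, hx⟩ := e.symm_apply_eq.2 rfl
  simp [this, hmono.injOn.leftInvOn_invFunOn hx]

namespace StieltjesFunction

variable (η : StieltjesFunction ℝ)

theorem measure_preimage_Iic_inter_Ioc (hη : Continuous η) {t T : ℝ} (htT : t ≤ T) (u : ℝ) :
    η.measure (η ⁻¹' Iic u ∩ Ioc t T) = ENNReal.ofReal (min (η T) u - η t) := by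
  rcases lt_or_ge u (η t) with hu | hu
  · have hempty : η ⁻¹' Iic u ∩ Ioc t T = ∅ :=
      eq_empty_of_forall_notMem fun s ⟨hsu, hts, _⟩ => (hu.trans_le (η.mono hts.le)).not_ge hsu
    rw [hempty, measure_empty, eq_comm, ENNReal.ofReal_eq_zero]
    linarith [min_le_right (η T) u]
  -- `β` is the last time in `[t, T]` at which `η` has not yet passed `u`
  obtain ⟨β, ⟨⟨htβ, hβT⟩, hβu⟩, hβmax⟩ : ∃ β, IsGreatest (Icc t T ∩ η ⁻¹' Iic u) β :=
    (isCompact_Icc.inter_right (isClosed_Iic.preimage hη)).exists_isGreatest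
      ⟨t, ⟨le_rfl, htT⟩, hu⟩
  have hset : η ⁻¹' Iic u ∩ Ioc t T = Ioc t β := by
    ext s
    constructor
    · rintro ⟨hsu, hts, hsT⟩
      exact ⟨hts, hβmax ⟨⟨hts.le, hsT⟩, hsu⟩⟩
    · rintro ⟨hts, hsβ⟩
      exact ⟨(η.mono hsβ).trans hβu, hts, hsβ.trans hβT⟩
  have hηβ : η β = min (η T) u := by
    obtain ⟨c, ⟨hβc, hcT⟩, hc⟩ := intermediate_value_Icc hβT hη.continuousOn
      ⟨le_min (η.mono hβT) hβu, min_le_left (η T) u⟩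
    have hcβ : c ≤ β := hβmax ⟨⟨htβ.trans hβc, hcT⟩, hc.le.trans (min_le_right _ _)⟩
    rw [← hc, le_antisymm hcβ hβc]
  rw [hset, η.measure_Ioc, hηβ]

theorem map_restrict_Ioc (hη : Continuous η) {t T : ℝ} (htT : t ≤ T) :
    (η.measure.restrict (Ioc t T)).map η = volume.restrict (Ioc (η t) (η T)) := by
  refine (Measure.ext_of_Iic _ _ fun u => ?_).symm
  rw [Measure.map_apply hη.measurable measurableSet_Iic,
    Measure.restrict_apply (hη.measurable measurableSet_Iic),
    Measure.restrict_apply measurableSet_Iic,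
    η.measure_preimage_Iic_inter_Ioc hη htT, inter_comm, Ioc_inter_Iic, Real.volume_Ioc]

theorem setIntegral_comp_eq_intervalIntegral {E : Type*} [NormedAddCommGroup E] [NormedSpace ℝ E]
    (hη : Continuous η) {t T : ℝ} (htT : t ≤ T) {g : ℝ → E}
    (hg : AEStronglyMeasurable g (volume.restrict (Ioc (η t) (η T)))) :
    ∫ s in Ioc t T, g (η s) ∂η.measure = ∫ u in η t..η T, g u := by
  rw [intervalIntegral.integral_of_le (η.mono htT), ← η.map_restrict_Ioc hη htT,
    integral_map hη.aemeasurable (by rwa [η.map_restrict_Ioc hη htT])]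

end StieltjesFunction

section

variable {D : ℝ} {φ : ℝ → ℝ}

theorem continuousOn_one_div_of_pos (hφc : ContinuousOn φ (Ici D))
    (hφpos : ∀ r ∈ Ici D, 0 < φ r) : ContinuousOn (fun r => 1 / φ r) (Ici D) :=
  continuousOn_const.div hφc fun r hr => (hφpos r hr).ne'

theorem Hfun_self : Hfun D φ D = 0 := intervalIntegral.integral_same

theorem strictMonoOn_Hfun (hφc : ContinuousOn φ (Ici D)) (hφpos : ∀ r ∈ Ici D, 0 < φ r) :
    StrictMonoOn (Hfun D φ) (Ici D) := by
  intro x hx y hy hxy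
  have hint : ∀ {p q}, D ≤ p → D ≤ q → IntervalIntegrable (fun r => 1 / φ r) volume p q :=
    fun hp hq => ((continuousOn_one_div_of_pos hφc hφpos).mono
      fun r hr => (le_min hp hq).trans hr.1).intervalIntegrable
  have hsplit : Hfun D φ x + ∫ r in x..y, 1 / φ r = Hfun D φ y :=
    intervalIntegral.integral_add_adjacent_intervals (hint le_rfl hx) (hint hx hy)
  have hpos : 0 < ∫ r in x..y, 1 / φ r :=
    intervalIntegral.intervalIntegral_pos_of_pos_on (hint hx hy)
      (fun r hr => one_div_pos.2 (hφpos r (hx.out.trans hr.1.le))) hxy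
  linarith

theorem continuousOn_Hfun (hφc : ContinuousOn φ (Ici D)) (hφpos : ∀ r ∈ Ici D, 0 < φ r) :
    ContinuousOn (Hfun D φ) (Ici D) := by
  intro x hx
  have hDx : D ≤ x + 1 := by linarith [hx.out]
  have hint : IntegrableOn (fun r => 1 / φ r) (uIcc D (x + 1)) := by
    rw [uIcc_of_le hDx]
    exact ((continuousOn_one_div_of_pos hφc hφpos).mono Icc_subset_Ici_self).integrableOn_Icc
  refine (intervalIntegral.continuousOn_primitive_interval hint x ?_).mono_of_mem_nhdsWithin ?_
  · rw [uIcc_of_le hDx]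
    exact ⟨hx, by linarith⟩
  · rw [uIcc_of_le hDx, ← Ici_inter_Iic]
    exact inter_mem_nhdsWithin _ (Iic_mem_nhds (by linarith))

theorem hasDerivAt_Hfun (hφc : ContinuousOn φ (Ici D)) (hφpos : ∀ r ∈ Ici D, 0 < φ r)
    {x : ℝ} (hx : D < x) : HasDerivAt (Hfun D φ) (1 / φ x) x :=
  intervalIntegral.integral_hasDerivAt_right
    (ContinuousOn.intervalIntegrable_of_Icc hx.le
      ((continuousOn_one_div_of_pos hφc hφpos).mono Icc_subset_Ici_self))
    ⟨Ici D, Ici_mem_nhds hx,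
      (continuousOn_one_div_of_pos hφc hφpos).aestronglyMeasurable measurableSet_Ici⟩
    ((continuousOn_one_div_of_pos hφc hφpos).continuousAt (Ici_mem_nhds hx))

theorem exists_lt_Hfun (hφc : ContinuousOn φ (Ici D)) (hφpos : ∀ r ∈ Ici D, 0 < φ r) {a : ℝ}
    (haI : ENNReal.ofReal a < ∫⁻ r in Ici D, ENNReal.ofReal (1 / φ r)) :
    ∃ b, D ≤ b ∧ a < Hfun D φ b := by
  have hcont := continuousOn_one_div_of_pos hφc hφpos
  have hlim : Tendsto (fun b => ∫⁻ r in Icc D b, ENNReal.ofReal (1 / φ r)) atTop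
      (𝓝 (∫⁻ r in Ici D, ENNReal.ofReal (1 / φ r))) := by
    have hcover : AECover (volume.restrict (Ici D)) atTop Iic := aecover_Iic tendsto_id
    have := hcover.lintegral_tendsto_of_countably_generated
      (hcont.aemeasurable measurableSet_Ici).ennreal_ofReal
    simpa only [Measure.restrict_restrict measurableSet_Iic, Iic_inter_Ici] using this
  obtain ⟨b, hab, hDb⟩ := ((hlim.eventually_const_lt haI).and (eventually_ge_atTop D)).exists
  have hHb : ∫⁻ r in Icc D b, ENNReal.ofReal (1 / φ r) = ENNReal.ofReal (Hfun D φ b) := by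
    rw [← ofReal_integral_eq_lintegral_ofReal (hcont.mono Icc_subset_Ici_self).integrableOn_Icc
      ((ae_restrict_iff' measurableSet_Icc).2
        (.of_forall fun r hr => (one_div_pos.2 (hφpos r hr.1)).le)),
      Hfun, intervalIntegral.integral_of_le hDb, integral_Icc_eq_integral_Ioc]
  rw [hHb, ENNReal.ofReal_lt_ofReal_iff'] at hab
  exact ⟨b, hDb, hab.1⟩

theorem continuousOn_Hinv (hφc : ContinuousOn φ (Ici D)) (hφpos : ∀ r ∈ Ici D, 0 < φ r) :
    ContinuousOn (Hinv D φ) (Hfun D φ '' Ici D) :=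
  (strictMonoOn_Hfun hφc hφpos).continuousOn_invFunOn (continuousOn_Hfun hφc hφpos)

theorem Icc_subset_image_Hfun (hφc : ContinuousOn φ (Ici D)) (hφpos : ∀ r ∈ Ici D, 0 < φ r)
    {a : ℝ} (haI : ENNReal.ofReal a < ∫⁻ r in Ici D, ENNReal.ofReal (1 / φ r)) :
    Icc 0 a ⊆ Hfun D φ '' Ici D := by
  obtain ⟨b, hDb, hab⟩ := exists_lt_Hfun hφc hφpos haI
  calc Icc 0 a ⊆ Icc (Hfun D φ D) (Hfun D φ b) := by
        rw [Hfun_self]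
        exact Icc_subset_Icc_right hab.le
    _ ⊆ Hfun D φ '' Icc D b :=
        intermediate_value_Icc hDb ((continuousOn_Hfun hφc hφpos).mono Icc_subset_Ici_self)
    _ ⊆ Hfun D φ '' Ici D := image_mono Icc_subset_Ici_self

theorem hasDerivAt_Hinv (hφc : ContinuousOn φ (Ici D)) (hφpos : ∀ r ∈ Ici D, 0 < φ r) {y : ℝ}
    (hy : Hfun D φ '' Ici D ∈ 𝓝 y) (hy0 : 0 < y) :
    HasDerivAt (Hinv D φ) (φ (Hinv D φ y)) y := by
  have hHinv : ∀ z ∈ Hfun D φ '' Ici D, Hinv D φ z ∈ Ici D ∧ Hfun D φ (Hinv D φ z) = z :=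
    fun z hz => ⟨(surjOn_image _ _).mapsTo_invFunOn hz, (surjOn_image _ _).rightInvOn_invFunOn hz⟩
  obtain ⟨hxD, hHx⟩ := hHinv y (mem_of_mem_nhds hy)
  have hDx : D < Hinv D φ y := by
    refine lt_of_le_of_ne hxD fun hDx => hy0.ne' ?_
    rw [← hHx, ← hDx, Hfun_self]
  have hderiv := (hasDerivAt_Hfun hφc hφpos hDx).of_local_left_inverse
    ((continuousOn_Hinv hφc hφpos).continuousAt hy) (one_div_ne_zero (hφpos _ hxD).ne')
    (eventually_of_mem hy fun z hz => (hHinv z hz).2)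
  rwa [one_div, inv_inv] at hderiv

theorem continuousOn_comp_Hinv (hφc : ContinuousOn φ (Ici D)) (hφpos : ∀ r ∈ Ici D, 0 < φ r)
    {a : ℝ} (haI : ENNReal.ofReal a < ∫⁻ r in Ici D, ENNReal.ofReal (1 / φ r)) :
    ContinuousOn (fun y => φ (Hinv D φ y)) (Icc 0 a) :=
  have hJ := Icc_subset_image_Hfun hφc hφpos haI
  hφc.comp ((continuousOn_Hinv hφc hφpos).mono hJ)
    fun _ hy => (surjOn_image _ _).mapsTo_invFunOn (hJ hy)

theorem integral_comp_Hinv (hφc : ContinuousOn φ (Ici D)) (hφpos : ∀ r ∈ Ici D, 0 < φ r)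
    {a p q : ℝ} (haI : ENNReal.ofReal a < ∫⁻ r in Ici D, ENNReal.ofReal (1 / φ r))
    (hp : 0 ≤ p) (hpq : p ≤ q) (hqa : q ≤ a) :
    ∫ v in p..q, φ (Hinv D φ v) = Hinv D φ q - Hinv D φ p := by
  have hJ := Icc_subset_image_Hfun hφc hφpos haI
  have hpqa : Icc p q ⊆ Icc 0 a := Icc_subset_Icc hp hqa
  refine intervalIntegral.integral_eq_sub_of_hasDerivAt_of_le hpq
    (((continuousOn_Hinv hφc hφpos).mono hJ).mono hpqa) (fun v hv => ?_)
    (((continuousOn_comp_Hinv hφc hφpos haI).mono hpqa).intervalIntegrable_of_Icc hpq)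
  have hv0a : v ∈ Ioo 0 a := ⟨hp.trans_lt hv.1, hv.2.trans_le hqa⟩
  exact hasDerivAt_Hinv hφc hφpos (mem_of_superset (Icc_mem_nhds hv0a.1 hv0a.2) hJ) hv0a.1

end

theorem stmt_9_general (D : ℝ) (φ : ℝ → ℝ)
    (hφc : ContinuousOn φ (Set.Ici D)) (hφpos : ∀ r ∈ Set.Ici D, 0 < φ r)
    (T : ℝ)
    (η : StieltjesFunction ℝ) (hηc : Continuous η) (hη0 : η 0 = 0)
    (a : ℝ) (haT : η T ≤ a)
    (haI : ENNReal.ofReal a < ∫⁻ r in Set.Ici D, ENNReal.ofReal (1 / φ r)) :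
    ContinuousOn (fun t => Hinv D φ (a - η t)) (Set.Icc 0 T) ∧
    (∀ t ∈ Set.Icc 0 T, Hinv D φ (a - η t) ∈ Set.Ici D) ∧
    ∀ t ∈ Set.Icc 0 T,
      Hinv D φ (a - η t) =
        Hinv D φ (a - η T) +
          ∫ s in Set.Ioc t T, φ (Hinv D φ (a - η s)) ∂η.measure := by
  have hJ := Icc_subset_image_Hfun hφc hφpos haI
  have hmaps : MapsTo (fun t => a - η t) (Icc 0 T) (Icc 0 a) := fun t ht =>
    ⟨sub_nonneg.2 ((η.mono ht.2).trans haT), sub_le_self a (hη0 ▸ η.mono ht.1)⟩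
  refine ⟨((continuousOn_Hinv hφc hφpos).mono hJ).comp (by fun_prop) hmaps,
    fun t ht => (surjOn_image _ _).mapsTo_invFunOn (hJ (hmaps ht)), fun t ht => ?_⟩
  have hηt : 0 ≤ η t := hη0 ▸ η.mono ht.1
  have hηtT : η t ≤ η T := η.mono ht.2
  have hg : ContinuousOn (fun u => φ (Hinv D φ (a - u))) (Icc (η t) (η T)) :=
    (continuousOn_comp_Hinv hφc hφpos haI).comp (by fun_prop)
      fun u hu => ⟨by linarith [hu.2], by linarith [hu.1]⟩
  rw [η.setIntegral_comp_eq_intervalIntegral hηc ht.2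
      ((hg.mono Ioc_subset_Icc_self).aestronglyMeasurable measurableSet_Ioc),
    intervalIntegral.integral_comp_sub_left (fun v => φ (Hinv D φ v)),
    integral_comp_Hinv hφc hφpos haI (by linarith) (by linarith) (by linarith)]
  ring

/-- Let `D ≥ 0`, `φ` continuous and positive on `[D, ∞)`, `H(x) = ∫_D^x dr/φ(r)`,
`I = ∫_D^∞ dr/φ(r)` and `H⁻¹` the inverse of `H`. Let `T > 0`, let `η` be a continuous
nondecreasing (Stieltjes) function with `η 0 = 0`, and let `a ≥ 0` satisfy `η T ≤ a < I`.
Then `x_t = H⁻¹(a − η t)` is continuous on `[0, T]` with values in `[D, ∞)`, and for every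
`t ∈ [0, T]`, `x_t = H⁻¹(a − η T) + ∫_{(t, T]} φ(x_s) dη(s)` (a Lebesgue–Stieltjes integral). -/
theorem stmt_9 (D : ℝ) (hD : 0 ≤ D) (φ : ℝ → ℝ)
    (hφc : ContinuousOn φ (Set.Ici D)) (hφpos : ∀ r ∈ Set.Ici D, 0 < φ r)
    (T : ℝ) (hT : 0 < T)
    (η : StieltjesFunction ℝ) (hηc : Continuous η) (hη0 : η 0 = 0)
    (a : ℝ) (ha : 0 ≤ a) (haT : η T ≤ a)
    (haI : ENNReal.ofReal a < ∫⁻ r in Set.Ici D, ENNReal.ofReal (1 / φ r)) :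
    ContinuousOn (fun t => Hinv D φ (a - η t)) (Set.Icc 0 T) ∧
    (∀ t ∈ Set.Icc 0 T, Hinv D φ (a - η t) ∈ Set.Ici D) ∧
    ∀ t ∈ Set.Icc 0 T,
      Hinv D φ (a - η t) =
        Hinv D φ (a - η T) +
          ∫ s in Set.Ioc t T, φ (Hinv D φ (a - η s)) ∂η.measure :=
  stmt_9_general D φ hφc hφpos T η hηc hη0 a haT haI
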